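/- arXiv:math/9805080 — 2 statements merged into one kernel-verified Lean document; each statement's English description precedes it below -/
import Mathlib

section
/- A polynomial map f : ℂ^k → ℂ^k whose components are polynomials of degree d ≥ 2 is regular (i.e., its homogeneous part f_h of degree d satisfies f_h⁻¹(0) = {0}) if and only if liminf_{|z|→∞} |f(z)|/|z|^d > 0. -/
open Filter

/-- Evaluation of a `k`-tuple of polynomials in `k` variables as a self-map of `ℂ^k`. -/
noncomputable def evalMap {k : ℕ} (F : Fin k → MvPolynomial (Fin k) ℂ)
    (z : EuclideanSpace ℂ (Fin k)) : EuclideanSpace ℂ (Fin k) :=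
  (WithLp.equiv 2 (Fin k → ℂ)).symm fun i =>
    MvPolynomial.eval ((WithLp.equiv 2 (Fin k → ℂ)) z) (F i)

/-!
Split `f = f_h + (f - f_h)`, where `f - f_h` has degree `< d` and is therefore `o(|z|^d)` at
infinity, so that `|f(z)|/|z|^d` and `|f_h(z)|/|z|^d` differ by `o(1)`. By homogeneity the latter
ratio is constant on rays. If `f_h` has no zero on the unit sphere, its minimum there, which is
positive by compactness, bounds the liminf from below; if `f_h(u) = 0` with `u ≠ 0`, the ratio
for `f` tends to `0` along the ray through `u`.
-/

open Asymptotics Bornology MvPolynomial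

section HomogeneousGrowth

variable {𝕜 E F : Type*} [RCLike 𝕜] [NormedAddCommGroup E] [NormedSpace 𝕜 E]
  [NormedAddCommGroup F] [NormedSpace 𝕜 F] {d : ℕ} {f g : E → F}

theorem norm_div_pow_smul_of_homogeneous (hg : ∀ (c : 𝕜) z, g (c • z) = c ^ d • g z)
    {c : 𝕜} (hc : c ≠ 0) (z : E) : ‖g (c • z)‖ / ‖c • z‖ ^ d = ‖g z‖ / ‖z‖ ^ d := by
  rw [hg, norm_smul, norm_smul, norm_pow, mul_pow]
  exact mul_div_mul_left _ _ (pow_ne_zero _ (norm_ne_zero_iff.2 hc))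

theorem exists_pos_le_norm_div_pow_of_homogeneous [ProperSpace E] [Nontrivial E]
    (hg : ∀ (c : 𝕜) z, g (c • z) = c ^ d • g z) (hcont : Continuous g)
    (hzero : ∀ z, g z = 0 → z = 0) : ∃ c > 0, ∀ z ≠ 0, c ≤ ‖g z‖ / ‖z‖ ^ d := by
  obtain ⟨u, hu⟩ := exists_ne (0 : E)
  obtain ⟨v, hv, hmin⟩ := (isCompact_sphere (0 : E) 1).exists_isMinOn
    ⟨_, mem_sphere_zero_iff_norm.2 (norm_smul_inv_norm (𝕜 := 𝕜) hu)⟩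
    (continuous_norm.comp hcont).continuousOn
  have hv0 : v ≠ 0 := ne_zero_of_mem_unit_sphere ⟨v, hv⟩
  refine ⟨‖g v‖, norm_pos_iff.2 fun h => hv0 (hzero v h), fun z hz => ?_⟩
  have hz₁ : ‖(‖z‖⁻¹ : 𝕜) • z‖ = 1 := norm_smul_inv_norm hz
  calc ‖g v‖ ≤ ‖g ((‖z‖⁻¹ : 𝕜) • z)‖ := hmin (mem_sphere_zero_iff_norm.2 hz₁)
    _ = ‖g ((‖z‖⁻¹ : 𝕜) • z)‖ / ‖(‖z‖⁻¹ : 𝕜) • z‖ ^ d := by rw [hz₁, one_pow, div_one]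
    _ = ‖g z‖ / ‖z‖ ^ d := norm_div_pow_smul_of_homogeneous hg (by simpa using hz) z

theorem eventually_abs_norm_div_pow_sub_le
    (hfg : (fun z => f z - g z) =o[cobounded E] (‖·‖ ^ d)) {ε : ℝ} (hε : 0 < ε) :
    ∀ᶠ z in cobounded E, |‖f z‖ / ‖z‖ ^ d - ‖g z‖ / ‖z‖ ^ d| ≤ ε := by
  filter_upwards [hfg.bound hε, eventually_ne_cobounded 0] with z hfgz hz
  have hpos : 0 < ‖z‖ ^ d := pow_pos (norm_pos_iff.2 hz) d
  rw [← sub_div, abs_div, abs_of_pos hpos, div_le_iff₀ hpos]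
  exact (abs_norm_sub_norm_le _ _).trans (by simpa using hfgz)

theorem tendsto_ofReal_smul_cobounded {u : E} (hu : u ≠ 0) :
    Tendsto (fun t : ℝ => (t : 𝕜) • u) atTop (cobounded E) := by
  rw [← tendsto_norm_atTop_iff_cobounded]
  simp only [norm_smul, RCLike.norm_ofReal]
  exact tendsto_abs_atTop_atTop.atTop_mul_const (norm_pos_iff.2 hu)

theorem frequently_norm_div_pow_le_add (hg : ∀ (c : 𝕜) z, g (c • z) = c ^ d • g z)
    (hfg : (fun z => f z - g z) =o[cobounded E] (‖·‖ ^ d)) {u : E} (hu : u ≠ 0) {ε : ℝ}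
    (hε : 0 < ε) : ∃ᶠ z in cobounded E, ‖f z‖ / ‖z‖ ^ d ≤ ‖g u‖ / ‖u‖ ^ d + ε := by
  have hray := tendsto_ofReal_smul_cobounded (𝕜 := 𝕜) hu
  refine hray.frequently (Eventually.frequently ?_)
  filter_upwards [hray.eventually (eventually_abs_norm_div_pow_sub_le hfg hε),
    eventually_gt_atTop 0] with t ht htpos
  rw [norm_div_pow_smul_of_homogeneous hg (RCLike.ofReal_ne_zero.2 htpos.ne')] at ht
  linarith [(abs_le.1 ht).2]

theorem liminf_norm_div_pow_le (hg : ∀ (c : 𝕜) z, g (c • z) = c ^ d • g z)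
    (hfg : (fun z => f z - g z) =o[cobounded E] (‖·‖ ^ d)) {u : E} (hu : u ≠ 0) :
    liminf (fun z => ‖f z‖ / ‖z‖ ^ d) (cobounded E) ≤ ‖g u‖ / ‖u‖ ^ d :=
  le_of_forall_pos_le_add fun _ hε =>
    liminf_le_of_frequently_le (frequently_norm_div_pow_le_add hg hfg hu hε)
      (isBoundedUnder_of ⟨0, fun _ => by positivity⟩)

theorem le_liminf_norm_div_pow [Nontrivial E] (hg : ∀ (c : 𝕜) z, g (c • z) = c ^ d • g z)
    (hfg : (fun z => f z - g z) =o[cobounded E] (‖·‖ ^ d)) {c : ℝ}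
    (hc : ∀ z ≠ 0, c ≤ ‖g z‖ / ‖z‖ ^ d) :
    c ≤ liminf (fun z => ‖f z‖ / ‖z‖ ^ d) (cobounded E) := by
  obtain ⟨u, hu⟩ := exists_ne (0 : E)
  have hcobdd : (cobounded E).IsCoboundedUnder (· ≥ ·) fun z => ‖f z‖ / ‖z‖ ^ d :=
    IsCoboundedUnder.of_frequently_le (frequently_norm_div_pow_le_add hg hfg hu one_pos)
  refine le_of_forall_pos_le_add fun ε hε => sub_le_iff_le_add.1 (le_liminf_of_le hcobdd ?_)
  filter_upwards [eventually_abs_norm_div_pow_sub_le hfg hε, eventually_ne_cobounded 0]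
    with z hz hz0
  linarith [hc z hz0, (abs_le.1 hz).1]

theorem forall_eq_zero_iff_liminf_norm_div_pow_pos [ProperSpace E] [Nontrivial E]
    (hg : ∀ (c : 𝕜) z, g (c • z) = c ^ d • g z) (hcont : Continuous g)
    (hfg : (fun z => f z - g z) =o[cobounded E] (‖·‖ ^ d)) :
    (∀ z, g z = 0 → z = 0) ↔ 0 < liminf (fun z => ‖f z‖ / ‖z‖ ^ d) (cobounded E) := by
  refine ⟨fun hzero => ?_, fun hpos z hz => ?_⟩
  · obtain ⟨c, hc, hle⟩ := exists_pos_le_norm_div_pow_of_homogeneous hg hcont hzero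
    exact hc.trans_le (le_liminf_norm_div_pow hg hfg hle)
  · by_contra hz0
    have hle := liminf_norm_div_pow_le hg hfg hz0
    rw [hz, norm_zero, zero_div] at hle
    exact hle.not_gt hpos

end HomogeneousGrowth

theorem MvPolynomial.IsHomogeneous.eval_smul {σ R : Type*} [CommSemiring R]
    {p : MvPolynomial σ R} {n : ℕ} (hp : p.IsHomogeneous n) (c : R) (x : σ → R) :
    eval (c • x) p = c ^ n * eval x p := by
  rw [eval_eq, eval_eq, Finset.mul_sum]
  refine Finset.sum_congr rfl fun m hm => ?_
  have hdeg : ∑ i ∈ m.support, m i = n := by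
    simpa [Finsupp.weight_apply, Finsupp.sum] using hp (mem_support_iff.1 hm)
  simp only [Pi.smul_apply, smul_eq_mul, mul_pow, Finset.prod_mul_distrib,
    Finset.prod_pow_eq_pow_sum, hdeg]
  ring

theorem MvPolynomial.totalDegree_sub_homogeneousComponent_lt {σ R : Type*} [CommRing R]
    {p : MvPolynomial σ R} {n : ℕ} (hn : 0 < n) (hp : p.totalDegree ≤ n) :
    (p - homogeneousComponent n p).totalDegree < n := by
  rw [totalDegree, Finset.sup_lt_iff (by simpa using hn)]
  intro m hm
  rw [mem_support_iff, coeff_sub, coeff_homogeneousComponent] at hm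
  split_ifs at hm with hmn
  · simp at hm
  · have hmp : coeff m p ≠ 0 := by simpa using hm
    exact ((le_totalDegree (mem_support_iff.2 hmp)).trans hp).lt_of_ne hmn

theorem MvPolynomial.isBigO_eval_ofLp_pow {σ 𝕜 : Type*} [Fintype σ] [RCLike 𝕜]
    {p : MvPolynomial σ 𝕜} {n : ℕ} (hp : p.totalDegree ≤ n) :
    (fun z : EuclideanSpace 𝕜 σ => eval z.ofLp p) =O[cobounded _] (‖·‖ ^ n) := by
  simp only [eval_eq]
  refine IsBigO.fun_sum fun m hm => (IsBigO.of_bound 1 ?_).const_mul_left _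
  filter_upwards [eventually_cobounded_le_norm 1] with z hz
  simp only [norm_prod, norm_pow, norm_norm, one_mul]
  calc ∏ i ∈ m.support, ‖z i‖ ^ m i ≤ ∏ i ∈ m.support, ‖z‖ ^ m i :=
        Finset.prod_le_prod (fun _ _ => by positivity) fun i _ =>
          pow_le_pow_left₀ (norm_nonneg _) (PiLp.norm_apply_le z i) _
    _ = ‖z‖ ^ ∑ i ∈ m.support, m i := Finset.prod_pow_eq_pow_sum _ _ _
    _ ≤ ‖z‖ ^ n := pow_le_pow_right₀ hz ((le_totalDegree hm).trans hp)

theorem evalMap_smul_of_isHomogeneous {k d : ℕ} {F : Fin k → MvPolynomial (Fin k) ℂ}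
    (hF : ∀ i, (F i).IsHomogeneous d) (c : ℂ) (z : EuclideanSpace ℂ (Fin k)) :
    evalMap F (c • z) = c ^ d • evalMap F z := by
  ext i
  exact (hF i).eval_smul c _

theorem continuous_evalMap {k : ℕ} (F : Fin k → MvPolynomial (Fin k) ℂ) :
    Continuous (evalMap F) :=
  (PiLp.continuous_toLp 2 _).comp <| continuous_pi fun i =>
    (continuous_eval (F i)).comp (PiLp.continuous_ofLp 2 _)

theorem isLittleO_evalMap_sub_evalMap_homogeneousComponent {k d : ℕ} (hd : 0 < d)
    {F : Fin k → MvPolynomial (Fin k) ℂ} (hdeg : ∀ i, (F i).totalDegree ≤ d) :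
    (fun z => evalMap F z - evalMap (fun i => homogeneousComponent d (F i)) z)
      =o[cobounded _] (‖·‖ ^ d) := by
  have hcoord : ∀ i, (fun z : EuclideanSpace ℂ (Fin k) =>
      eval z.ofLp (F i - homogeneousComponent d (F i))) =o[cobounded _] (‖·‖ ^ d) := fun i =>
    (isBigO_eval_ofLp_pow (Nat.le_sub_one_of_lt
      (totalDegree_sub_homogeneousComponent_lt hd (hdeg i)))).trans_isLittleO
      ((isLittleO_pow_pow_atTop_of_lt (Nat.sub_one_lt hd.ne')).comp_tendsto
        tendsto_norm_cobounded_atTop)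
  have := ((EuclideanSpace.equiv (Fin k) ℂ).symm.isBigO_comp _ _).trans_isLittleO
    (isLittleO_pi.2 hcoord)
  refine this.congr_left fun z => ?_
  ext i
  simp [evalMap]

/-- A polynomial map `f : ℂ^k → ℂ^k` whose components are polynomials of degree `d ≥ 2`
is regular (its top-degree homogeneous part `f_h` satisfies `f_h⁻¹(0) = {0}`) iff
`liminf_{|z|→∞} |f(z)|/|z|^d > 0`. -/
theorem regular_iff_liminf_pos {k d : ℕ} (hk : 1 ≤ k) (hd : 2 ≤ d)
    (F : Fin k → MvPolynomial (Fin k) ℂ)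
    (hdeg : ∀ i, (F i).totalDegree ≤ d) :
    (∀ z : EuclideanSpace ℂ (Fin k),
        evalMap (fun i => MvPolynomial.homogeneousComponent d (F i)) z = 0 → z = 0)
      ↔ 0 < Filter.liminf (fun z : EuclideanSpace ℂ (Fin k) => ‖evalMap F z‖ / ‖z‖ ^ d)
            (Filter.comap (fun z : EuclideanSpace ℂ (Fin k) => ‖z‖) Filter.atTop) := by
  have : Nonempty (Fin k) := ⟨⟨0, hk⟩⟩
  rw [comap_norm_atTop]
  exact forall_eq_zero_iff_liminf_norm_div_pow_pos
    (evalMap_smul_of_isHomogeneous fun i => homogeneousComponent_isHomogeneous d (F i))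
    (continuous_evalMap _)
    (isLittleO_evalMap_sub_evalMap_homogeneousComponent (by omega) hdeg)
end

section
/- There is no continuous function α : {|ζ| = 1} → ℂ \ {0} satisfying α(ζ)² · α(ζ⁻²)⁻¹ · ζ² = 1 for all ζ on the unit circle. -/
/-!
Parametrize the circle by `t ↦ exp (t i)` and take a continuous logarithm `L` of
`g t = α (exp (t i))` on `ℝ`. Since `g` is `2π`-periodic, `L (t + 2π) = L t + 2πi A`
for an integer `A`, the winding number of `α`. Taking logarithms in the relation,
`2 L t - L (-2t) + 2ti` is a continuous function with values in `2πiℤ`, hence constant.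
Comparing its values at `t = 0` and `t = 2π`, where `L (2π) = L 0 + 2πi A` and
`L (-4π) = L 0 - 4πi A`, gives `4A + 2 = 0`, impossible in `ℤ`.
-/

open Complex

theorem Complex.exists_continuous_exp_eq {X : Type*} [TopologicalSpace X]
    [SimplyConnectedSpace X] [LocallyPathConnectedSpace X] {f : X → ℂ} (hf : Continuous f)
    (hf₀ : ∀ x, f x ≠ 0) : ∃ L : X → ℂ, Continuous L ∧ ∀ x, exp (L x) = f x := by
  obtain ⟨x₀⟩ : Nonempty X := inferInstance
  obtain ⟨L, ⟨-, hL⟩, -⟩ := isCoveringMapOn_exp.existsUnique_continuousMap_lifts ⟨f, hf⟩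
    (exp_log (hf₀ x₀)) hf₀
  exact ⟨L, L.continuous, congrFun hL⟩

theorem Complex.exists_int_forall_eq_of_exp_eq_one {X : Type*} [TopologicalSpace X]
    [PreconnectedSpace X] [Nonempty X] {d : X → ℂ} (hd : Continuous d)
    (h : ∀ x, exp (d x) = 1) : ∃ n : ℤ, ∀ x, d x = n * (2 * Real.pi * I) := by
  obtain ⟨x₀⟩ : Nonempty X := inferInstance
  obtain ⟨n, hn⟩ := exp_eq_one_iff.mp (h x₀)
  refine ⟨n, fun x => hn ▸ ?_⟩
  exact isCoveringMap_exp.const_of_comp hd (fun a a' => Subtype.ext (by simp [h])) x x₀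

theorem Complex.exists_int_forall_add_sub_eq_of_periodic_exp {L : ℝ → ℂ} (hL : Continuous L)
    {T : ℝ} (hT : ∀ t, exp (L (t + T)) = exp (L t)) :
    ∃ A : ℤ, ∀ t, L (t + T) - L t = A * (2 * Real.pi * I) :=
  exists_int_forall_eq_of_exp_eq_one (by fun_prop) fun t => by
    rw [exp_sub, hT t, div_self (exp_ne_zero _)]

theorem false_of_lift_relation {L : ℝ → ℂ} {A m : ℤ}
    (hA : ∀ t : ℝ, L (t + 2 * Real.pi) - L t = A * (2 * Real.pi * I))
    (hm : ∀ t : ℝ, 2 * L t - L (-2 * t) + 2 * t * I = m * (2 * Real.pi * I)) : False := by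
  have h₁ := hA (-(4 * Real.pi))
  have h₂ := hA (-(2 * Real.pi))
  have h₃ := hA 0
  have h₄ := hm 0
  have h₅ := hm (2 * Real.pi)
  push_cast at h₄ h₅
  ring_nf at h₁ h₂ h₃ h₄ h₅
  have hzero : ((4 * A + 2 : ℤ) : ℂ) * (2 * Real.pi * I) = 0 := by
    push_cast
    linear_combination h₅ - h₄ - 2 * h₃ - h₁ - h₂
  have : 4 * A + 2 = 0 := by
    exact_mod_cast (mul_eq_zero.mp hzero).resolve_right two_pi_I_ne_zero
  omega

/-- Winding number obstruction (example after Proposition A.1): there is no continuous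
nonvanishing `α` on the unit circle with `α(ζ)² · α(ζ⁻²)⁻¹ · ζ² = 1` for all `|ζ| = 1`. -/
theorem no_circle_solution :
    ¬ ∃ α : ℂ → ℂ, ContinuousOn α {ζ : ℂ | ‖ζ‖ = 1} ∧
      ∀ ζ : ℂ, ‖ζ‖ = 1 →
        α ζ ≠ 0 ∧ (α ζ) ^ 2 * (α ((ζ ^ 2)⁻¹))⁻¹ * ζ ^ 2 = 1 := by
  rintro ⟨α, hα, hrel⟩
  set g : ℝ → ℂ := fun t => α (exp (t * I))
  have hg : Continuous g := hα.comp_continuous (by fun_prop) norm_exp_ofReal_mul_I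
  obtain ⟨L, hL, hexpL⟩ :=
    exists_continuous_exp_eq hg fun t => (hrel _ (norm_exp_ofReal_mul_I t)).1
  have hperiodic (t : ℝ) : exp (L (t + 2 * Real.pi)) = exp (L t) := by
    simp only [hexpL, g]
    push_cast
    rw [add_mul, exp_add, mul_comm _ I, exp_two_pi_mul_I, mul_one]
  obtain ⟨A, hA⟩ := exists_int_forall_add_sub_eq_of_periodic_exp hL hperiodic
  obtain ⟨m, hm⟩ : ∃ m : ℤ, ∀ t : ℝ,
      2 * L t - L (-2 * t) + 2 * t * I = m * (2 * Real.pi * I) := by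
    refine exists_int_forall_eq_of_exp_eq_one (by fun_prop) fun t => ?_
    have exp_two_mul (z : ℂ) : exp (2 * z) = exp z ^ 2 := by rw [two_mul, exp_add, sq]
    have hinv : (exp (t * I) ^ 2)⁻¹ = exp ((-2 * t : ℝ) * I) := by
      rw [← exp_nat_mul, ← exp_neg]; push_cast; ring_nf
    have hrel_t := (hrel _ (norm_exp_ofReal_mul_I t)).2
    rw [hinv] at hrel_t
    rw [← hrel_t, exp_add, exp_sub, exp_two_mul,
      mul_assoc, exp_two_mul, hexpL, hexpL, div_eq_mul_inv]
  exact false_of_lift_relation hA hm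
end
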